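/- Let M be a finite set of items, let V be an additive valuation on subsets of M given by a nonnegative weight function, let n and t be integers with 1 ≤ t ≤ n − 1, and let b_1, b_2, …, b_{2t} be 2t distinct items of M such that V({b_{2a−1}, b_{2a}}) ≤ MMS_V^n(M) for every a ∈ {1, …, t}. Then MMS_V^{n−t}(M \ {b_1, …, b_{2t}}) ≥ MMS_V^n(M). (This is the key claim proved inside Lemmas 'remove2' and 'remove3': removing t pairs of items, each of total value at most the maximin share, together with t agents does not decrease the remaining maximin share.) -/

import Mathlib

/-- `A` is a partition of the finite set `M` into `r` pairwise disjoint
(possibly empty) bundles whose union is `M`. -/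
def IsPartition {ι : Type*} [DecidableEq ι] {r : ℕ} (M : Finset ι) (A : Fin r → Finset ι) : Prop :=
  (∀ i j, i ≠ j → Disjoint (A i) (A j)) ∧ Finset.univ.biUnion A = M

/-- The maximin share `MMS_f^r(M)`. -/
noncomputable def MMS {ι : Type*} [DecidableEq ι] (M : Finset ι) (f : Finset ι → ℝ) (r : ℕ) : ℝ :=
  sSup { x : ℝ | ∃ A : Fin r → Finset ι, IsPartition M A ∧ x = ⨅ j, f (A j) }

/-- A valuation is additive if it is given by a nonnegative weight function. -/
def IsAdditive {ι : Type*} (V : Finset ι → ℝ) : Prop :=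
  ∃ w : ι → ℝ, (∀ b, 0 ≤ w b) ∧ ∀ S : Finset ι, V S = ∑ b ∈ S, w b

/-!
Fix a partition of `M` into `n` bundles each worth at least `μ = MMS_V^n(M)`. The two items of a
pair lie in at most two bundles `A j`, `A k` (`j ≠ k`); merging these two bundles and deleting the
pair leaves a bundle worth at least `2μ - V {x, y} ≥ μ`, and the other bundles are untouched. This
gives `n - 1` bundles of `M \ {x, y}`, each worth at least `μ`, and the step is repeated for every
pair.
-/

def mergeBundles {ι : Type*} {r : ℕ} [DecidableEq ι] (A : Fin (r + 1) → Finset ι)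
    (j k : Fin (r + 1)) : Fin r → Finset ι :=
  fun p => if j.succAbove p = k then A k ∪ A j else A (j.succAbove p)

namespace IsPartition

variable {ι : Type*} [DecidableEq ι] {M : Finset ι} {r : ℕ} {A : Fin r → Finset ι}

theorem subset (hA : IsPartition M A) (j : Fin r) : A j ⊆ M :=
  hA.2 ▸ Finset.subset_biUnion_of_mem A (Finset.mem_univ j)

theorem exists_mem (hA : IsPartition M A) {z : ι} (hz : z ∈ M) : ∃ j, z ∈ A j := by
  rw [← hA.2] at hz
  simpa using hz

theorem exists_forall_ne_notMem [NeZero r] (hA : IsPartition M A) (z : ι) :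
    ∃ i, ∀ l, l ≠ i → z ∉ A l := by
  by_cases hz : z ∈ M
  · obtain ⟨i, hi⟩ := hA.exists_mem hz
    exact ⟨i, fun l hl hzl => Finset.disjoint_left.1 (hA.1 l i hl) hzl hi⟩
  · exact ⟨0, fun l _ hzl => hz (hA.subset l hzl)⟩

theorem exists_ne_forall_disjoint_pair (hA : IsPartition M A) [Nontrivial (Fin r)]
    (x y : ι) : ∃ j k, j ≠ k ∧ ∀ l, l ≠ j → l ≠ k → Disjoint (A l) {x, y} := by
  have : NeZero r := ⟨fun h => by subst h; exact not_nontrivial _ ‹_›⟩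
  obtain ⟨i, hi⟩ := hA.exists_forall_ne_notMem x
  obtain ⟨i', hi'⟩ := hA.exists_forall_ne_notMem y
  obtain ⟨k, hk, hi'k⟩ : ∃ k, k ≠ i ∧ (i' = i ∨ i' = k) := by
    by_cases h : i' = i
    · obtain ⟨k, hk⟩ := exists_ne i
      exact ⟨k, hk, Or.inl h⟩
    · exact ⟨i', h, Or.inr rfl⟩
  refine ⟨i, k, hk.symm, fun l hli hlk => ?_⟩
  have hl : l ≠ i' := by rcases hi'k with rfl | rfl <;> assumption
  simp [Finset.disjoint_insert_right, hi l hli, hi' l hl]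

theorem sdiff (hA : IsPartition M A) (S : Finset ι) :
    IsPartition (M \ S) (fun j => A j \ S) := by
  refine ⟨fun i j hij => (hA.1 i j hij).mono Finset.sdiff_subset Finset.sdiff_subset, ?_⟩
  ext z
  simp [← hA.2]

theorem mergeBundles {A : Fin (r + 1) → Finset ι} (hA : IsPartition M A) {j k : Fin (r + 1)}
    (hjk : j ≠ k) : IsPartition M (mergeBundles A j k) := by
  constructor
  · intro p q hpq
    have hpj := Fin.succAbove_ne j p
    have hqj := Fin.succAbove_ne j q
    have hpq' : j.succAbove p ≠ j.succAbove q := Fin.succAbove_right_injective.ne hpq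
    unfold _root_.mergeBundles
    split_ifs with hp hq hq
    · exact absurd (hp.trans hq.symm) hpq'
    · exact Finset.disjoint_union_left.2 ⟨hp ▸ hA.1 _ _ hpq', hA.1 _ _ hqj.symm⟩
    · exact Finset.disjoint_union_right.2 ⟨hq ▸ hA.1 _ _ hpq', hA.1 _ _ hpj⟩
    · exact hA.1 _ _ hpq'
  · rw [← hA.2]
    ext z
    simp only [Finset.mem_biUnion, Finset.mem_univ, true_and, _root_.mergeBundles]
    constructor
    · rintro ⟨p, hz⟩
      split_ifs at hz
      · rcases Finset.mem_union.1 hz with hz | hz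
        exacts [⟨k, hz⟩, ⟨j, hz⟩]
      · exact ⟨_, hz⟩
    · rintro ⟨l, hz⟩
      by_cases hlj : l = j
      · obtain ⟨p, hp⟩ := Fin.exists_succAbove_eq hjk.symm
        exact ⟨p, by simp [hp, hlj ▸ hz]⟩
      · obtain ⟨p, hp⟩ := Fin.exists_succAbove_eq hlj
        refine ⟨p, ?_⟩
        split_ifs with hpk
        · exact Finset.mem_union_left _ (hpk ▸ hp ▸ hz)
        · exact hp ▸ hz

end IsPartition

theorem Finset.sum_sub_sum_le_sum_sdiff {ι β : Type*} [DecidableEq ι] [AddCommGroup β]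
    [PartialOrder β] [IsOrderedAddMonoid β] {w : ι → β} (hw : ∀ z, 0 ≤ w z) (s t : Finset ι) :
    ∑ z ∈ s, w z - ∑ z ∈ t, w z ≤ ∑ z ∈ s \ t, w z := by
  rw [← Finset.sum_inter_add_sum_sdiff s t, sub_le_iff_le_add, add_comm]
  exact (add_le_add_iff_left _).2
    (Finset.sum_le_sum_of_subset_of_nonneg Finset.inter_subset_right fun z _ _ => hw z)

section MMS

variable {ι : Type*} [DecidableEq ι]

theorem isPartition_ite_zero {r : ℕ} [NeZero r] (M : Finset ι) :
    IsPartition M (fun j : Fin r => if j = 0 then M else ∅) := by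
  refine ⟨fun i j hij => ?_, ?_⟩
  · dsimp only
    split_ifs with hi hj <;> simp_all
  · ext z
    simp [apply_ite (z ∈ ·)]

def partitionMinValues (M : Finset ι) (f : Finset ι → ℝ) (r : ℕ) : Set ℝ :=
  {x | ∃ A : Fin r → Finset ι, IsPartition M A ∧ x = ⨅ j, f (A j)}

theorem partitionMinValues_finite (M : Finset ι) (f : Finset ι → ℝ) (r : ℕ) :
    (partitionMinValues M f r).Finite := by
  refine ((Set.Finite.pi fun _ => M.powerset.finite_toSet).image
    fun A : Fin r → Finset ι => ⨅ j, f (A j)).subset ?_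
  rintro _ ⟨A, hA, rfl⟩
  exact ⟨A, fun j _ => Finset.mem_powerset.2 (hA.subset j), rfl⟩

theorem le_MMS_of_isPartition {M : Finset ι} {f : Finset ι → ℝ} {r : ℕ} [NeZero r] {μ : ℝ}
    {A : Fin r → Finset ι} (hA : IsPartition M A) (hAμ : ∀ j, μ ≤ f (A j)) : μ ≤ MMS M f r :=
  (le_ciInf hAμ).trans (le_csSup (partitionMinValues_finite M f r).bddAbove ⟨A, hA, rfl⟩)

theorem exists_isPartition_MMS_le {r : ℕ} [NeZero r] (M : Finset ι) (f : Finset ι → ℝ) :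
    ∃ A : Fin r → Finset ι, IsPartition M A ∧ ∀ j, MMS M f r ≤ f (A j) := by
  obtain ⟨A, hA, hMMS⟩ : MMS M f r ∈ partitionMinValues M f r :=
    Set.Nonempty.csSup_mem ⟨_, _, isPartition_ite_zero M, rfl⟩
      (partitionMinValues_finite M f r)
  exact ⟨A, hA, fun j => hMMS ▸ ciInf_le (Set.finite_range _).bddBelow j⟩

end MMS

section RemovePairs

variable {ι : Type*} [DecidableEq ι] {M : Finset ι} {w : ι → ℝ} {μ : ℝ}

theorem exists_isPartition_sdiff_pair (hw : ∀ z, 0 ≤ w z) {r : ℕ} [NeZero r]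
    {A : Fin (r + 1) → Finset ι} (hA : IsPartition M A) (hAμ : ∀ j, μ ≤ ∑ z ∈ A j, w z)
    {x y : ι} (hxy : ∑ z ∈ {x, y}, w z ≤ μ) :
    ∃ B : Fin r → Finset ι, IsPartition (M \ {x, y}) B ∧ ∀ p, μ ≤ ∑ z ∈ B p, w z := by
  have : Nontrivial (Fin (r + 1)) :=
    Fin.nontrivial_iff_two_le.2 (by have := NeZero.ne r; omega)
  obtain ⟨j, k, hjk, hdisj⟩ := hA.exists_ne_forall_disjoint_pair x y
  refine ⟨fun p => mergeBundles A j k p \ {x, y}, (hA.mergeBundles hjk).sdiff _, fun p => ?_⟩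
  dsimp only [mergeBundles]
  split_ifs with hpk
  · calc μ ≤ ∑ z ∈ A k ∪ A j, w z - ∑ z ∈ {x, y}, w z := by
          rw [Finset.sum_union (hA.1 k j hjk.symm)]
          linarith [hAμ k, hAμ j]
      _ ≤ _ := Finset.sum_sub_sum_le_sum_sdiff hw _ _
  · rw [Finset.sdiff_eq_self_of_disjoint (hdisj _ (Fin.succAbove_ne j p) hpk)]
    exact hAμ _

theorem exists_isPartition_sdiff_biUnion_pairs {κ : Type*} [DecidableEq κ]
    (hw : ∀ z, 0 ≤ w z) (b c : κ → ι) (s : Finset κ) (hs : ∀ a ∈ s, ∑ z ∈ {b a, c a}, w z ≤ μ)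
    {r N : ℕ} [NeZero r] (hN : N = r + s.card) {A : Fin N → Finset ι} (hA : IsPartition M A)
    (hAμ : ∀ j, μ ≤ ∑ z ∈ A j, w z) :
    ∃ B : Fin r → Finset ι,
      IsPartition (M \ s.biUnion fun a => {b a, c a}) B ∧ ∀ p, μ ≤ ∑ z ∈ B p, w z := by
  induction s using Finset.induction_on generalizing r with
  | empty =>
    subst hN
    exact ⟨A, by simpa using hA, hAμ⟩
  | insert a s has ih =>
    obtain ⟨B, hB, hBμ⟩ := ih (r := r + 1) (fun a' ha' => hs a' (Finset.mem_insert_of_mem ha'))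
      (by rw [hN, Finset.card_insert_of_notMem has]; ring)
    obtain ⟨C, hC, hCμ⟩ :=
      exists_isPartition_sdiff_pair hw hB hBμ (hs a (Finset.mem_insert_self a s))
    refine ⟨C, ?_, hCμ⟩
    rwa [Finset.biUnion_insert, Finset.union_comm, Finset.sdiff_union_distrib,
      ← Finset.sdiff_sdiff_left']

end RemovePairs

theorem MMS_remove_pairs_general {ι : Type*} [Fintype ι] [DecidableEq ι]
    (V : Finset ι → ℝ) (hV : IsAdditive V)
    {n t : ℕ} (ht2 : t + 1 ≤ n)
    (b c : Fin t → ι)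
    (hpairs : ∀ a : Fin t, V {b a, c a} ≤ MMS Finset.univ V n) :
    MMS Finset.univ V n ≤
      MMS (Finset.univ \ (Finset.univ.image b ∪ Finset.univ.image c)) V (n - t) := by
  obtain ⟨w, hw, hVw⟩ := hV
  have : NeZero n := ⟨by omega⟩
  have : NeZero (n - t) := ⟨by omega⟩
  obtain ⟨A, hA, hAμ⟩ := exists_isPartition_MMS_le (r := n) Finset.univ V
  simp only [hVw] at hAμ hpairs
  obtain ⟨B, hB, hBμ⟩ := exists_isPartition_sdiff_biUnion_pairs hw b c Finset.univ
    (fun a _ => hpairs a) (r := n - t) (by rw [Finset.card_univ, Fintype.card_fin]; omega) hA hAμ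
  have hpairs_union : (Finset.univ.biUnion fun a => {b a, c a}) =
      Finset.univ.image b ∪ Finset.univ.image c := by
    ext z
    simp [exists_or, eq_comm]
  rw [hpairs_union] at hB
  exact le_MMS_of_isPartition hB fun j => (hVw _).symm ▸ hBμ j

/-- Removing `t` pairs of distinct items `{b a, c a}` (`a = 1, …, t`), each pair of total
value at most the maximin share, together with `t` agents does not decrease the maximin
share of an additive valuation. -/
theorem MMS_remove_pairs {ι : Type*} [Fintype ι] [DecidableEq ι]
    (V : Finset ι → ℝ) (hV : IsAdditive V)
    {n t : ℕ} (ht1 : 1 ≤ t) (ht2 : t + 1 ≤ n)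
    (b c : Fin t → ι)
    (hinj : Function.Injective (Sum.elim b c : Fin t ⊕ Fin t → ι))
    (hpairs : ∀ a : Fin t, V {b a, c a} ≤ MMS Finset.univ V n) :
    MMS Finset.univ V n ≤
      MMS (Finset.univ \ (Finset.univ.image b ∪ Finset.univ.image c)) V (n - t) :=
  MMS_remove_pairs_general V hV ht2 b c hpairs
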